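/- arXiv:2504.19376 — 2 statements merged into one kernel-verified Lean document; each statement's English description precedes it below -/
import Mathlib

section
/- The space of polynomial vector fields on ℝ² of degree at most r decomposes as the direct sum of K(𝒫_{r−1}(ℝ²)) and grad(𝒫_{r+1}(ℝ²)), where K(p) = (−p y, p x). -/
open MvPolynomial

/-- The linear operator `K : p ↦ (−p·y, p·x)` from polynomials in two variables to
polynomial vector fields. -/
noncomputable def Kmap :
    MvPolynomial (Fin 2) ℝ →ₗ[ℝ] MvPolynomial (Fin 2) ℝ × MvPolynomial (Fin 2) ℝ :=
  LinearMap.prod (-(LinearMap.mulRight ℝ (X 1 : MvPolynomial (Fin 2) ℝ))) (LinearMap.mulRight ℝ (X 0))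

/-- The gradient operator `q ↦ (∂q/∂x, ∂q/∂y)`. -/
noncomputable def gradMap :
    MvPolynomial (Fin 2) ℝ →ₗ[ℝ] MvPolynomial (Fin 2) ℝ × MvPolynomial (Fin 2) ℝ :=
  LinearMap.prod (pderiv (0 : Fin 2) : Derivation ℝ (MvPolynomial (Fin 2) ℝ) (MvPolynomial (Fin 2) ℝ)).toLinearMap (pderiv (1 : Fin 2) : Derivation ℝ (MvPolynomial (Fin 2) ℝ) (MvPolynomial (Fin 2) ℝ)).toLinearMap

open MvPolynomial Finsupp

noncomputable section

abbrev PP := MvPolynomial (Fin 2) ℝ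

lemma coeff_X_mul_pderiv (i : Fin 2) (q : PP) (m : Fin 2 →₀ ℕ) :
    coeff m (X i * pderiv i q) = (m i : ℝ) * coeff m q := by
  induction q using MvPolynomial.induction_on' with
  | add p q hp hq => simp only [map_add, mul_add, coeff_add, hp, hq]
  | monomial s c =>
    rw [pderiv_monomial]
    rcases Nat.eq_zero_or_pos (s i) with h | h
    · rw [h]
      simp only [Nat.cast_zero, mul_zero, map_zero, coeff_zero]
      rw [coeff_monomial]
      split_ifs with he
      · subst he; rw [h]; simp
      · ring
    · have hle : Finsupp.single i 1 ≤ s := by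
        rw [Finsupp.single_le_iff]; exact h
      have : X (R := ℝ) i * monomial (s - Finsupp.single i 1) (c * s i)
          = monomial s (c * s i) := by
        rw [X, monomial_mul, one_mul, add_tsub_cancel_of_le hle]
      rw [this, coeff_monomial, coeff_monomial]
      split_ifs with he
      · subst he; ring
      · ring

/-- Monomial-wise inverse of the Euler operator. -/
def Einv (w : PP) : PP :=
  ∑ m ∈ w.support, monomial m (coeff m w / ((m 0 : ℝ) + m 1))

lemma coeff_Einv (w : PP) (n : Fin 2 →₀ ℕ) :
    coeff n (Einv w) = coeff n w / ((n 0 : ℝ) + n 1) := by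
  rw [Einv, coeff_sum]
  simp only [coeff_monomial]
  rw [Finset.sum_ite_eq' w.support n (fun m => coeff m w / ((m 0 : ℝ) + m 1))]
  split_ifs with h
  · rfl
  · rw [MvPolynomial.notMem_support_iff.mp h, zero_div]

lemma support_Einv (w : PP) : (Einv w).support ⊆ w.support := by
  intro n hn
  rw [MvPolynomial.mem_support_iff] at hn ⊢
  intro h
  exact hn (by rw [coeff_Einv, h, zero_div])

lemma totalDegree_pderiv_le (i : Fin 2) (f : PP) {n : ℕ}
    (hf : f.totalDegree ≤ n + 1) : (pderiv i f).totalDegree ≤ n := by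
  conv_lhs => rw [f.as_sum]
  rw [map_sum]
  refine (totalDegree_finset_sum _ _).trans (Finset.sup_le fun s hs => ?_)
  rw [pderiv_monomial]
  rcases Nat.eq_zero_or_pos (s i) with h | h
  · rw [h]; simp
  · have hle : Finsupp.single i 1 ≤ s := by rw [Finsupp.single_le_iff]; exact h
    refine (totalDegree_monomial_le _ _).trans ?_
    have hsum : (s - Finsupp.single i 1).sum (fun _ e => e) + 1
        = s.sum (fun _ e => e) := by
      conv_rhs => rw [← add_tsub_cancel_of_le hle]
      rw [Finsupp.sum_add_index (fun _ _ => rfl) (fun _ _ _ _ => rfl), add_comm]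
      simp [Finsupp.sum_single_index]
    have := (le_totalDegree hs).trans hf
    have h2 : (s - Finsupp.single i 1).sum (fun _ e => e) ≤ n := by omega
    exact h2

lemma decompose (r : ℕ) (hr : 1 ≤ r) (u v : PP)
    (hu : u.totalDegree ≤ r) (hv : v.totalDegree ≤ r) :
    ∃ p q : PP, p.totalDegree ≤ r - 1 ∧ q.totalDegree ≤ r + 1 ∧
      u = pderiv 0 q - X 1 * p ∧ v = X 0 * p + pderiv 1 q := by
  set w : PP := X 0 * u + X 1 * v with hw
  have hw0 : coeff 0 w = 0 := by
    rw [hw, coeff_add, coeff_X_mul', coeff_X_mul']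
    simp
  have hdegw : w.totalDegree ≤ r + 1 := by
    refine (totalDegree_add _ _).trans (max_le ?_ ?_) <;>
    · refine (totalDegree_mul _ _).trans ?_
      rw [totalDegree_X]
      omega
  set q : PP := Einv w with hqdef
  have hq : q.totalDegree ≤ r + 1 :=
    (totalDegree_le_of_support_subset (support_Einv w)).trans hdegw
  have hEq : X 0 * pderiv 0 q + X 1 * pderiv 1 q = w := by
    apply MvPolynomial.ext
    intro m
    rw [coeff_add, coeff_X_mul_pderiv, coeff_X_mul_pderiv, hqdef, coeff_Einv]
    rcases Nat.eq_zero_or_pos (m 0 + m 1) with h | h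
    · have hm : m = 0 := by
        ext i; fin_cases i <;> simp <;> omega
      rw [hm]
      simpa using hw0.symm
    · have hpos : (0 : ℝ) < (m 0 : ℝ) + m 1 := by exact_mod_cast h
      have hne : (m 0 : ℝ) + m 1 ≠ 0 := hpos.ne'
      field_simp
  set a : PP := u - pderiv 0 q with ha
  set b : PP := v - pderiv 1 q with hb
  have hab : X 0 * a + X 1 * b = 0 := by
    rw [ha, hb]
    linear_combination -hEq
  have hb0 : ∀ m : Fin 2 →₀ ℕ, m 0 = 0 → coeff m b = 0 := by
    intro m hm
    have h := congrArg (coeff (m + Finsupp.single 1 1)) hab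
    rw [coeff_add, coeff_X_mul', coeff_X_mul', coeff_zero] at h
    have h0 : (0 : Fin 2) ∉ (m + Finsupp.single 1 1).support := by
      simp [Finsupp.mem_support_iff, hm]
    have h1 : (1 : Fin 2) ∈ (m + Finsupp.single 1 1).support := by
      simp [Finsupp.mem_support_iff]
    rw [if_neg h0, if_pos h1, zero_add, add_tsub_cancel_right] at h
    exact h
  set p : PP := MvPolynomial.divMonomial b (Finsupp.single 0 1) with hpdef
  have hbp : X 0 * p = b := by
    apply MvPolynomial.ext
    intro m
    rw [coeff_X_mul']
    split_ifs with h
    · rw [hpdef, coeff_divMonomial, add_tsub_cancel_of_le]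
      rw [Finsupp.single_le_iff]
      simpa [Finsupp.mem_support_iff, Nat.one_le_iff_ne_zero] using h
    · rw [hb0 m (by simpa [Finsupp.mem_support_iff] using h)]
  have hap : a = -(X 1 * p) := by
    have hc : (X 0 : PP) * a = X 0 * (-(X 1 * p)) := by
      linear_combination hab + X 1 * hbp
    exact mul_left_cancel₀ (X_ne_zero 0) hc
  have hdegb : b.totalDegree ≤ r := by
    rw [hb, sub_eq_add_neg]
    refine (totalDegree_add _ _).trans (max_le hv ?_)
    rw [totalDegree_neg]
    exact totalDegree_pderiv_le 1 q hq
  have hdegp : p.totalDegree ≤ r - 1 := by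
    rw [totalDegree]
    refine Finset.sup_le fun m hm => ?_
    have hmb : Finsupp.single 0 1 + m ∈ b.support := by
      rw [MvPolynomial.mem_support_iff] at hm ⊢
      rwa [hpdef, coeff_divMonomial] at hm
    have hsum := (le_totalDegree hmb).trans hdegb
    rw [Finsupp.sum_add_index (fun _ _ => rfl) (fun _ _ _ _ => rfl)] at hsum
    simp only [Finsupp.sum_single_index] at hsum
    omega
  exact ⟨p, q, hdegp, hq, by linear_combination hap, by linear_combination -hbp⟩

end

open MvPolynomial

lemma Kmap_apply (p : PP) : Kmap p = (-(p * X 1), p * X 0) := rfl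

lemma gradMap_apply (q : PP) : gradMap q = (pderiv 0 q, pderiv 1 q) := rfl

/-- `𝒫_r(Tℝ²) = K(𝒫_{r−1}(ℝ²)) ⊕ grad(𝒫_{r+1}(ℝ²))`: the two images are disjoint
and together span the polynomial vector fields of degree at most `r`. -/
theorem stmt_6 (r : ℕ) (hr : 1 ≤ r) :
    Disjoint (Submodule.map Kmap (MvPolynomial.restrictTotalDegree (Fin 2) ℝ (r - 1)))
      (Submodule.map gradMap (MvPolynomial.restrictTotalDegree (Fin 2) ℝ (r + 1))) ∧
    Submodule.map Kmap (MvPolynomial.restrictTotalDegree (Fin 2) ℝ (r - 1)) ⊔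
        Submodule.map gradMap (MvPolynomial.restrictTotalDegree (Fin 2) ℝ (r + 1)) =
      (MvPolynomial.restrictTotalDegree (Fin 2) ℝ r).prod
        (MvPolynomial.restrictTotalDegree (Fin 2) ℝ r) := by
  constructor
  · rw [Submodule.disjoint_def]
    rintro x ⟨p, -, hp⟩ ⟨q, -, hq⟩
    rw [Kmap_apply] at hp
    rw [gradMap_apply] at hq
    have h1 : pderiv (0 : Fin 2) q = x.1 := congrArg Prod.fst hq
    have h2 : pderiv (1 : Fin 2) q = x.2 := congrArg Prod.snd hq
    have hx1 : x.1 = -(p * X 1) := (congrArg Prod.fst hp).symm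
    have hx2 : x.2 = p * X 0 := (congrArg Prod.snd hp).symm
    have hE : X 0 * pderiv (0 : Fin 2) q + X 1 * pderiv (1 : Fin 2) q = 0 := by
      rw [h1, h2, hx1, hx2]; ring
    have hcoeff : ∀ m : Fin 2 →₀ ℕ, m ≠ 0 → coeff m q = 0 := by
      intro m hm
      have h := congrArg (coeff m) hE
      rw [coeff_add, coeff_X_mul_pderiv, coeff_X_mul_pderiv, coeff_zero, ← add_mul] at h
      have hne : (m 0 : ℝ) + m 1 ≠ 0 := by
        have : m 0 ≠ 0 ∨ m 1 ≠ 0 := by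
          by_contra hc
          push_neg at hc
          exact hm (by ext i; fin_cases i <;> simp [hc.1, hc.2])
        have : 0 < m 0 + m 1 := by omega
        have : (0 : ℝ) < (m 0 : ℝ) + m 1 := by exact_mod_cast this
        exact this.ne'
      exact (mul_eq_zero.mp h).resolve_left hne
    have hgi : ∀ i : Fin 2, pderiv i q = 0 := by
      intro i
      have hX : X i * pderiv i q = 0 := by
        apply MvPolynomial.ext
        intro m
        rw [coeff_X_mul_pderiv, coeff_zero]
        rcases eq_or_ne m 0 with h | h
        · simp [h]
        · rw [hcoeff m h, mul_zero]
      exact (mul_eq_zero.mp hX).resolve_left (X_ne_zero i)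
    rw [← hq, hgi 0, hgi 1]
    rfl
  · apply le_antisymm
    · apply sup_le
      · rintro x ⟨p, hp, rfl⟩
        replace hp : p.totalDegree ≤ r - 1 := (mem_restrictTotalDegree _ _ _).mp hp
        rw [Kmap_apply, Submodule.mem_prod]
        constructor <;> rw [mem_restrictTotalDegree]
        · rw [totalDegree_neg]
          refine (totalDegree_mul _ _).trans ?_
          rw [totalDegree_X]; omega
        · refine (totalDegree_mul _ _).trans ?_
          rw [totalDegree_X]; omega
      · rintro x ⟨q, hq, rfl⟩
        replace hq : q.totalDegree ≤ r + 1 := (mem_restrictTotalDegree _ _ _).mp hq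
        rw [gradMap_apply, Submodule.mem_prod]
        constructor <;> rw [mem_restrictTotalDegree]
        · exact totalDegree_pderiv_le 0 q hq
        · exact totalDegree_pderiv_le 1 q hq
    · rintro ⟨u, v⟩ hx
      rw [Submodule.mem_prod, mem_restrictTotalDegree, mem_restrictTotalDegree] at hx
      obtain ⟨p, q, hp, hq, huv1, huv2⟩ := decompose r hr u v hx.1 hx.2
      rw [Submodule.mem_sup]
      refine ⟨Kmap p, ⟨p, (mem_restrictTotalDegree _ _ _).mpr hp, rfl⟩,
             gradMap q, ⟨q, (mem_restrictTotalDegree _ _ _).mpr hq, rfl⟩, ?_⟩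
      rw [Kmap_apply, gradMap_apply, Prod.mk_add_mk]
      refine Prod.ext ?_ ?_ <;> simp only
      · linear_combination -huv1
      · linear_combination -huv2
end

section
/- Let K = [[A, B^T],[B, 0]] be a block matrix with A an r×r real matrix and B an s×r real matrix with s ≤ r. If A is symmetric positive semidefinite, then K is invertible if and only if B is surjective (has rank s) and the restriction of the bilinear form of A to ker(B) is nondegenerate, i.e. K is invertible iff B has rank s and ker(A) ∩ ker(B) = {0}. -/
open Matrix

lemma rank_eq_iff_injective' {s r : ℕ} (B : Matrix (Fin s) (Fin r) ℝ) :
    B.rank = s ↔ ∀ y : Fin s → ℝ, Bᵀ.mulVec y = 0 → y = 0 := by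
  rw [← Matrix.rank_transpose]
  unfold Matrix.rank
  constructor
  · intro h y hy
    have hker : LinearMap.ker Bᵀ.mulVecLin = ⊥ := by
      have := LinearMap.finrank_range_add_finrank_ker Bᵀ.mulVecLin
      rw [h] at this
      simp only [Module.finrank_pi, Fintype.card_fin] at this
      have : Module.finrank ℝ (LinearMap.ker Bᵀ.mulVecLin) = 0 := by omega
      exact Submodule.finrank_eq_zero.mp this
    have : y ∈ LinearMap.ker Bᵀ.mulVecLin := hy
    rw [hker] at this
    simpa using this
  · intro h
    have hker : LinearMap.ker Bᵀ.mulVecLin = ⊥ := by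
      rw [LinearMap.ker_eq_bot']
      intro y hy
      exact h y hy
    have := LinearMap.finrank_range_add_finrank_ker Bᵀ.mulVecLin
    rw [hker] at this
    simp only [finrank_bot, add_zero, Module.finrank_pi, Fintype.card_fin] at this
    exact this

/-- For `A ∈ ℝ^{r×r}` symmetric positive semidefinite and `B ∈ ℝ^{s×r}` with `s ≤ r`,
the saddle-point block matrix `K = [[A, Bᵀ],[B, 0]]` is invertible if and only if
`B` has full rank `s` and `ker A ∩ ker B = {0}`. -/
theorem stmt_17 (r s : ℕ) (hs : s ≤ r)
    (A : Matrix (Fin r) (Fin r) ℝ) (hA : A.PosSemidef)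
    (B : Matrix (Fin s) (Fin r) ℝ) :
    IsUnit (Matrix.fromBlocks A Bᵀ B (0 : Matrix (Fin s) (Fin s) ℝ)).det ↔
      B.rank = s ∧ ∀ x : Fin r → ℝ, A.mulVec x = 0 → B.mulVec x = 0 → x = 0 := by
  set K := Matrix.fromBlocks A Bᵀ B (0 : Matrix (Fin s) (Fin s) ℝ) with hK
  have hdet : IsUnit K.det ↔ ∀ z, K.mulVec z = 0 → z = 0 := by
    rw [isUnit_iff_ne_zero]
    constructor
    · intro h z hz
      by_contra hz0
      exact h (Matrix.exists_mulVec_eq_zero_iff.mp ⟨z, hz0, hz⟩)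
    · intro h hdet0
      obtain ⟨v, hv0, hv⟩ := Matrix.exists_mulVec_eq_zero_iff.mpr hdet0
      exact hv0 (h v hv)
  rw [hdet]
  have hmul : ∀ (x : Fin r → ℝ) (y : Fin s → ℝ),
      K.mulVec (Sum.elim x y) =
        Sum.elim (A.mulVec x + Bᵀ.mulVec y) (B.mulVec x) := by
    intro x y
    rw [hK, Matrix.fromBlocks_mulVec]
    simp
  constructor
  · intro h
    constructor
    · rw [rank_eq_iff_injective' B]
      intro y hy
      have := h (Sum.elim 0 y) (by
        rw [hmul]
        simp [hy])
      have := congrFun this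
      ext i
      simpa using this (Sum.inr i)
    · intro x hAx hBx
      have := h (Sum.elim x 0) (by
        rw [hmul]
        simp [hAx, hBx])
      have := congrFun this
      ext i
      simpa using this (Sum.inl i)
  · rintro ⟨hrank, hker⟩ z hz
    set x := z ∘ Sum.inl with hx
    set y := z ∘ Sum.inr with hy
    have hz' : z = Sum.elim x y := by ext (i | j) <;> rfl
    rw [hz', hmul] at hz
    have h1 : A.mulVec x + Bᵀ.mulVec y = 0 := by
      ext i; exact congrFun hz (Sum.inl i)
    have h2 : B.mulVec x = 0 := by
      ext j; exact congrFun hz (Sum.inr j)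
    -- xᵀ A x = 0
    have hxAx : star x ⬝ᵥ A.mulVec x = 0 := by
      have : x ⬝ᵥ (A.mulVec x + Bᵀ.mulVec y) = 0 := by rw [h1, dotProduct_zero]
      rw [dotProduct_add] at this
      have hBty : x ⬝ᵥ Bᵀ.mulVec y = 0 := by
        rw [Matrix.dotProduct_mulVec, Matrix.vecMul_transpose, h2, zero_dotProduct]
      simp only [star_trivial]
      linarith [this, hBty]
    have hAx : A.mulVec x = 0 := (hA.dotProduct_mulVec_zero_iff x).mp hxAx
    have hx0 : x = 0 := hker x hAx h2
    have hBty0 : Bᵀ.mulVec y = 0 := by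
      rw [hAx, zero_add] at h1; exact h1
    have hy0 : y = 0 := (rank_eq_iff_injective' B).mp hrank y hBty0
    rw [hz', hx0, hy0]
    ext (i | j) <;> simp
end
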